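/- In the game saliquant, if p is an odd prime, then SG(2p) = p − 1 or SG(2p) = (p − 1)/2. -/
import Mathlib


/-- Sprague–Grundy values for the game saliquant: the options of a position `n`
are the positions `n - k` where `1 ≤ k ≤ n` and `k` does not divide `n`, and
`sg n` is the least nonnegative integer not among the values of the options. -/
noncomputable def sg : ℕ → ℕ
  | n => sInf {m : ℕ | ∀ k, 1 ≤ k → k ≤ n → ¬ k ∣ n → sg (n - k) ≠ m}
decreasing_by omega

lemma sg_def (n : ℕ) :
    sg n = sInf {m : ℕ | ∀ k, 1 ≤ k → k ≤ n → ¬ k ∣ n → sg (n - k) ≠ m} := by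
  rw [sg]

lemma sg_key : ∀ n : ℕ, (n % 2 = 1 → 2 * sg n + 1 = n) ∧
    (n % 2 = 0 → n ≠ 0 → 2 * sg n + 2 ≤ n) := by
  intro n
  induction n using Nat.strong_induction_on with
  | _ n IH =>
    have IHodd : ∀ m, m < n → m % 2 = 1 → 2 * sg m + 1 = m := fun m hm h => (IH m hm).1 h
    have IHeven : ∀ m, m < n → m % 2 = 0 → m ≠ 0 → 2 * sg m + 2 ≤ m :=
      fun m hm h h0 => (IH m hm).2 h h0
    constructor
    · intro hodd
      have hmem : (n - 1) / 2 ∈ {m : ℕ | ∀ k, 1 ≤ k → k ≤ n → ¬ k ∣ n → sg (n - k) ≠ m} := by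
        intro k hk1 hkn hknd
        by_cases hke : k % 2 = 0
        · have h1 : (n - k) % 2 = 1 := by omega
          have h2 := IHodd (n - k) (by omega) h1
          omega
        · have hne : n - k ≠ 0 := by
            intro h0
            have hkn' : k = n := by omega
            exact hknd (hkn' ▸ dvd_refl n)
          have h1 : (n - k) % 2 = 0 := by omega
          have h2 := IHeven (n - k) (by omega) h1 hne
          omega
      have hnot : ∀ v, v < (n - 1) / 2 →
          v ∉ {m : ℕ | ∀ k, 1 ≤ k → k ≤ n → ¬ k ∣ n → sg (n - k) ≠ m} := by
        intro v hv hvS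
        have hkd : ¬ (n - (2 * v + 1)) ∣ n := by
          intro hd
          have h2 : (2 : ℕ) ∣ (n - (2 * v + 1)) := by omega
          have := h2.trans hd
          omega
        have heq : n - (n - (2 * v + 1)) = 2 * v + 1 := by omega
        have hsv : sg (n - (n - (2 * v + 1))) = v := by
          rw [heq]
          have := IHodd (2 * v + 1) (by omega) (by omega)
          omega
        exact hvS (n - (2 * v + 1)) (by omega) (by omega) hkd hsv
      rw [sg_def]
      have hle := Nat.sInf_le hmem
      have hin := Nat.sInf_mem ⟨_, hmem⟩
      set s := sInf {m : ℕ | ∀ k, 1 ≤ k → k ≤ n → ¬ k ∣ n → sg (n - k) ≠ m} with hs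
      have : ¬ s < (n - 1) / 2 := fun h => hnot s h hin
      omega
    · intro heven hne0
      have h2d : (2 : ℕ) ∣ n := by omega
      have hmem : n / 2 - 1 ∈ {m : ℕ | ∀ k, 1 ≤ k → k ≤ n → ¬ k ∣ n → sg (n - k) ≠ m} := by
        intro k hk1 hkn hknd
        have hk1' : k ≠ 1 := fun h => hknd (h ▸ one_dvd n)
        have hk2' : k ≠ 2 := fun h => hknd (h ▸ h2d)
        by_cases hke : k % 2 = 0
        · have hne : n - k ≠ 0 := by
            intro h0
            have hkn' : k = n := by omega
            exact hknd (hkn' ▸ dvd_refl n)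
          have h1 : (n - k) % 2 = 0 := by omega
          have h2 := IHeven (n - k) (by omega) h1 hne
          omega
        · have h1 : (n - k) % 2 = 1 := by omega
          have h2 := IHodd (n - k) (by omega) h1
          omega
      rw [sg_def]
      have hle := Nat.sInf_le hmem
      omega

theorem saliquant_double_prime (p : ℕ) (hp : p.Prime) (hodd : Odd p) :
    sg (2 * p) = p - 1 ∨ sg (2 * p) = (p - 1) / 2 := by
  have hp2 : p % 2 = 1 := Nat.odd_iff.mp hodd
  have hp3 : 3 ≤ p := by
    have := hp.two_le
    omega
  -- divisors of 2p
  have hdvd : ∀ k, k ∣ 2 * p → k = 1 ∨ k = 2 ∨ k = p ∨ k = 2 * p := by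
    intro k hk
    by_cases hke : k % 2 = 0
    · obtain ⟨j, rfl⟩ : 2 ∣ k := by omega
      have hj : j ∣ p := by
        rcases hk with ⟨c, hc⟩
        refine ⟨c, ?_⟩
        have hc' : 2 * p = 2 * (j * c) := by rw [hc]; ring
        omega
      rcases (Nat.Prime.eq_one_or_self_of_dvd hp j hj) with h | h <;> omega
    · have hcop : Nat.Coprime k 2 := by
        rw [Nat.coprime_comm]
        exact Nat.coprime_two_left.mpr (Nat.odd_iff.mpr (by omega))
      have hj : k ∣ p := hcop.dvd_of_dvd_mul_left hk
      rcases (Nat.Prime.eq_one_or_self_of_dvd hp k hj) with h | h <;> omega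
  have key := sg_key
  -- small odd positions have known sg values
  have hsgodd : ∀ v, 2 * v + 1 < 2 * p → sg (2 * v + 1) = v := by
    intro v hv
    have := (key (2 * v + 1)).1 (by omega)
    omega
  -- (1)&(2): all values in {0,...,p-2} except (p-1)/2 are option values
  have hnotmem : ∀ v, v ≤ p - 2 → v ≠ (p - 1) / 2 →
      v ∉ {m : ℕ | ∀ k, 1 ≤ k → k ≤ 2 * p → ¬ k ∣ 2 * p → sg (2 * p - k) ≠ m} := by
    intro v hv hvne hvS
    have hkd : ¬ (2 * p - (2 * v + 1)) ∣ 2 * p := by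
      intro hd
      rcases hdvd _ hd with h | h | h | h <;> omega
    have heq : 2 * p - (2 * p - (2 * v + 1)) = 2 * v + 1 := by omega
    have hsv : sg (2 * p - (2 * p - (2 * v + 1))) = v := by
      rw [heq]; exact hsgodd v (by omega)
    exact hvS (2 * p - (2 * v + 1)) (by omega) (by omega) hkd hsv
  -- (3): p - 1 is not an option value
  have hmem : p - 1 ∈ {m : ℕ | ∀ k, 1 ≤ k → k ≤ 2 * p → ¬ k ∣ 2 * p → sg (2 * p - k) ≠ m} := by
    intro k hk1 hkn hknd
    have hk1' : k ≠ 1 := fun h => hknd (h ▸ one_dvd _)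
    have hk2' : k ≠ 2 := fun h => hknd (h ▸ ⟨p, rfl⟩)
    have hkn' : k ≠ 2 * p := fun h => hknd (h ▸ dvd_refl _)
    by_cases hke : k % 2 = 0
    · have h2 := (key (2 * p - k)).2 (by omega) (by omega)
      omega
    · have h2 := (key (2 * p - k)).1 (by omega)
      omega
  rw [sg_def]
  have hle := Nat.sInf_le hmem
  have hin := Nat.sInf_mem ⟨_, hmem⟩
  set s := sInf {m : ℕ | ∀ k, 1 ≤ k → k ≤ 2 * p → ¬ k ∣ 2 * p → sg (2 * p - k) ≠ m} with hs
  by_cases h : s = p - 1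
  · left; exact h
  · right
    by_contra hne
    exact hnotmem s (by omega) hne hin
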